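/- For all $N \ge 1$, weights $a_i > 0$, update lengths $L_i \ge 1$, and channel reliabilities $p_i \in (0,1]$, the ratio $\rho^S = \dfrac{\big(\sum_{i=1}^N \sqrt{a_i(3L_i-1)/(2p_i)}\big)^2 + \sum_{i=1}^N a_i}{\tfrac{1}{2}\big(\sum_{i=1}^N \sqrt{a_i L_i/p_i}\big)^2 + \sum_{i=1}^N a_i}$ satisfies $\rho^S < 3$. -/
import Mathlib


open Finset

theorem srp_optimality_ratio_lt_three
    (N : ℕ) (hN : 1 ≤ N)
    (a L p : Fin N → ℝ)
    (ha : ∀ i, 0 < a i) (hL : ∀ i, 1 ≤ L i)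
    (hp : ∀ i, 0 < p i) (hp1 : ∀ i, p i ≤ 1) :
    ((∑ i, Real.sqrt (a i * (3 * L i - 1) / (2 * p i))) ^ 2 + ∑ i, a i) /
      ((1 / 2) * (∑ i, Real.sqrt (a i * L i / p i)) ^ 2 + ∑ i, a i) < 3 := by
  have hne : (Finset.univ : Finset (Fin N)).Nonempty := by
    simpa [Finset.univ_nonempty_iff] using Fin.pos_iff_nonempty.mp hN
  set S := ∑ i, Real.sqrt (a i * (3 * L i - 1) / (2 * p i)) with hS
  set T := ∑ i, Real.sqrt (a i * L i / p i) with hT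
  have hA : 0 < ∑ i, a i := Finset.sum_pos (fun i _ => ha i) hne
  have hTnn : 0 ≤ T := Finset.sum_nonneg fun i _ => Real.sqrt_nonneg _
  have hSnn : 0 ≤ S := Finset.sum_nonneg fun i _ => Real.sqrt_nonneg _
  have hterm : ∀ i : Fin N,
      Real.sqrt (a i * (3 * L i - 1) / (2 * p i)) <
        Real.sqrt (3 / 2) * Real.sqrt (a i * L i / p i) := by
    intro i
    rw [← Real.sqrt_mul (by norm_num)]
    apply Real.sqrt_lt_sqrt
    · have hLi := hL i
      have := (ha i).le
      have := (hp i).le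
      apply div_nonneg
      · nlinarith
      · linarith
    · have hLi := hL i
      have hpi := hp i
      have hai := ha i
      rw [div_lt_iff₀ (by positivity)]
      field_simp
      nlinarith [mul_pos hai hpi]
  have hST : S < Real.sqrt (3 / 2) * T := by
    calc S < ∑ i, Real.sqrt (3 / 2) * Real.sqrt (a i * L i / p i) :=
          Finset.sum_lt_sum_of_nonempty hne (fun i _ => hterm i)
      _ = Real.sqrt (3 / 2) * T := by rw [Finset.mul_sum]
  have hS2 : S ^ 2 < (3 / 2) * T ^ 2 := by
    have := pow_lt_pow_left₀ hST hSnn (n := 2) (by norm_num)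
    calc S ^ 2 < (Real.sqrt (3 / 2) * T) ^ 2 := this
      _ = (3 / 2) * T ^ 2 := by
          rw [mul_pow, Real.sq_sqrt (by norm_num)]
  rw [div_lt_iff₀ (by positivity)]
  nlinarith [hA, hS2]
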